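/- arXiv:1902.05531 — 3 statements merged into one kernel-verified Lean document; each statement's English description precedes it below -/
import Mathlib

section
/- Let n ≥ 1 be a natural number. For each integer k ≥ 1 set u_k = 2^{−(k+1)}·√(6n/(1 − 4^{−k})) and A(n,k) = erf(u_k), where erf(u) = (2/√π)·∫_0^u e^{−t²} dt. Then Σ_{k=1}^{∞} A(n,k) ≤ (1/2)·log₂(6n/π + 1) + √(3/(1 + π/(6n))). -/
/-! With `s = 6n/π`, the terms `2/√π · u (k+1) = √(s/(4^(k+1)-1))` at least halve from one
index to the next. Bounding the first `m` values of `erf` by `1` and the others by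
`erf x ≤ 2x/√π` gives `∑ ≤ m + 2√(s/(4^(m+1)-1))`. For `m = ⌊log₄(s+1)⌋` this tail term is at
most `2^t` with `t = log₄(s+1) - m ∈ [0,1)`, and `2^t ≤ 1 + t`, so the sum is at most
`log₄(s+1) + 1`; finally `1 ≤ √(3/(1+π/(6n)))` because `n ≥ 1`. -/

open Real MeasureTheory

namespace Real

noncomputable def erf (x : ℝ) : ℝ := 2 / √π * ∫ t in (0 : ℝ)..x, exp (-t ^ 2)

lemma erf_nonneg {x : ℝ} (hx : 0 ≤ x) : 0 ≤ erf x :=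
  mul_nonneg (by positivity) (intervalIntegral.integral_nonneg hx fun t _ => (exp_pos _).le)

lemma integral_exp_neg_sq_le_sqrt_pi_div_two (x : ℝ) :
    ∫ t in (0 : ℝ)..x, exp (-t ^ 2) ≤ √π / 2 := by
  have hint : IntegrableOn (fun t : ℝ => exp (-t ^ 2)) (Set.Ioi 0) := by
    simpa using (integrable_exp_neg_mul_sq one_pos).integrableOn (s := Set.Ioi 0)
  rcases le_or_gt x 0 with hx | hx
  · calc ∫ t in (0 : ℝ)..x, exp (-t ^ 2) = -∫ t in x..0, exp (-t ^ 2) :=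
          intervalIntegral.integral_symm _ _
      _ ≤ 0 := neg_nonpos.mpr (intervalIntegral.integral_nonneg hx fun t _ => (exp_pos _).le)
      _ ≤ √π / 2 := by positivity
  · calc ∫ t in (0 : ℝ)..x, exp (-t ^ 2) = ∫ t in Set.Ioc 0 x, exp (-t ^ 2) :=
          intervalIntegral.integral_of_le hx.le
      _ ≤ ∫ t in Set.Ioi 0, exp (-t ^ 2) :=
          setIntegral_mono_set hint (.of_forall fun t => (exp_pos _).le)
            Set.Ioc_subset_Ioi_self.eventuallyLE
      _ = √π / 2 := by simpa using integral_gaussian_Ioi 1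

lemma erf_le_one (x : ℝ) : erf x ≤ 1 := by
  calc erf x ≤ 2 / √π * (√π / 2) := by
        unfold erf; gcongr; exact integral_exp_neg_sq_le_sqrt_pi_div_two x
    _ = 1 := by field_simp

lemma erf_le_mul_self {x : ℝ} (hx : 0 ≤ x) : erf x ≤ 2 / √π * x := by
  unfold erf
  gcongr
  calc ∫ t in (0 : ℝ)..x, exp (-t ^ 2) ≤ ∫ _ in (0 : ℝ)..x, (1 : ℝ) :=
        intervalIntegral.integral_mono_on hx ((by fun_prop : Continuous _).intervalIntegrable _ _)
          intervalIntegrable_const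
          fun t _ => exp_le_one_iff.mpr (by nlinarith [sq_nonneg t])
    _ = x := by simp

end Real

section Halving

variable {a v : ℕ → ℝ}

lemma le_mul_half_pow_of_le_half (hv : ∀ k, v (k + 1) ≤ v k / 2) (m k : ℕ) :
    v (m + k) ≤ v m * (1 / 2) ^ k := by
  induction k with
  | zero => simp
  | succ k ih =>
    calc v (m + (k + 1)) ≤ v (m + k) / 2 := hv _
      _ ≤ v m * (1 / 2) ^ k / 2 := by gcongr
      _ = v m * (1 / 2) ^ (k + 1) := by ring

lemma summable_of_le_of_le_half (ha : ∀ k, 0 ≤ a k) (hav : ∀ k, a k ≤ v k)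
    (hv : ∀ k, v (k + 1) ≤ v k / 2) : Summable a :=
  .of_nonneg_of_le ha (fun k => (hav k).trans (by simpa using le_mul_half_pow_of_le_half hv 0 k))
    (summable_geometric_two.mul_left (v 0))

lemma tsum_le_nat_add_two_mul_of_le_half (ha : ∀ k, 0 ≤ a k) (ha₁ : ∀ k, a k ≤ 1)
    (hav : ∀ k, a k ≤ v k) (hv : ∀ k, v (k + 1) ≤ v k / 2) (m : ℕ) :
    ∑' k, a k ≤ m + 2 * v m := by
  have hs := summable_of_le_of_le_half ha hav hv
  rw [← hs.sum_add_tsum_nat_add m]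
  gcongr
  · calc ∑ i ∈ Finset.range m, a i ≤ ∑ _ ∈ Finset.range m, (1 : ℝ) :=
          Finset.sum_le_sum fun i _ => ha₁ i
      _ = m := by simp
  · calc ∑' k, a (k + m) ≤ ∑' k, v m * (1 / 2) ^ k :=
          (hs.comp_injective (add_left_injective m)).tsum_le_tsum
            (fun k => (hav _).trans (add_comm k m ▸ le_mul_half_pow_of_le_half hv m k))
            (summable_geometric_two.mul_left _)
      _ = 2 * v m := by rw [tsum_mul_left, tsum_geometric_two, mul_comm]

end Halving

lemma two_div_sqrt_pi_mul_two_zpow_mul_sqrt (x : ℝ) (k : ℕ) :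
    2 / √π * ((2 : ℝ) ^ (-((k : ℤ) + 1)) * √(6 * x / (1 - (4 : ℝ) ^ (-(k : ℤ)))))
      = √(6 * x / π / (4 ^ k - 1)) := by
  have h2 : (2 : ℝ) ^ (-((k : ℤ) + 1)) = √((4 ^ k * 4)⁻¹) := by
    rw [← sqrt_sq (zpow_nonneg zero_le_two _), sq, ← mul_zpow, zpow_neg,
      zpow_add_one₀ (by norm_num), zpow_natCast]
    norm_num
  rw [h2, show (2 : ℝ) = √4 by rw [show (4 : ℝ) = 2 ^ 2 by norm_num, sqrt_sq zero_le_two],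
    ← sqrt_div' _ pi_pos.le, ← sqrt_mul (by positivity), ← sqrt_mul (by positivity),
    zpow_neg, zpow_natCast, show 1 - ((4 : ℝ) ^ k)⁻¹ = (4 ^ k - 1) / 4 ^ k by field_simp]
  congr 1
  field_simp

lemma sqrt_div_four_pow_succ_sub_one_le {s : ℝ} (hs : 0 ≤ s) (k : ℕ) :
    √(s / (4 ^ (k + 2) - 1)) ≤ √(s / (4 ^ (k + 1) - 1)) / 2 := by
  have h4 : (4 : ℝ) ≤ 4 ^ (k + 1) := le_self_pow₀ (by norm_num) (by omega)
  rw [show (2 : ℝ) = √4 by rw [show (4 : ℝ) = 2 ^ 2 by norm_num, sqrt_sq zero_le_two],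
    ← sqrt_div' _ (by norm_num), div_div]
  gcongr
  · linarith
  · rw [pow_succ (4 : ℝ) (k + 1)]; linarith

lemma two_rpow_le_one_add {t : ℝ} (h0 : 0 ≤ t) (h1 : t ≤ 1) : (2 : ℝ) ^ t ≤ 1 + t := by
  simpa [one_add_one_eq_two] using
    rpow_one_add_le_one_add_mul_self (s := 1) (by norm_num) h0 h1

lemma exists_nat_add_two_mul_sqrt_le {s : ℝ} (hs : 0 ≤ s) :
    ∃ m : ℕ, m + 2 * √(s / (4 ^ (m + 1) - 1)) ≤ logb 4 (s + 1) + 1 := by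
  set K := logb 4 (s + 1)
  have hK : 0 ≤ K := logb_nonneg (by norm_num) (by linarith)
  refine ⟨⌊K⌋₊, ?_⟩
  set m := ⌊K⌋₊
  set t := K - m
  have ht₀ : 0 ≤ t := sub_nonneg.mpr (Nat.floor_le hK)
  have ht₁ : t ≤ 1 := by linarith [Nat.lt_floor_add_one K]
  have hs₁ : s + 1 = 4 ^ t * 4 ^ m := by
    rw [← rpow_natCast, ← rpow_add (by norm_num), sub_add_cancel,
      rpow_logb (by norm_num) (by norm_num) (by linarith)]
  have h4t : (4 : ℝ) ^ t = 2 ^ t * 2 ^ t := by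
    rw [← mul_rpow (by norm_num) (by norm_num)]; norm_num
  have h4t_le : (4 : ℝ) ^ t ≤ 4 := by
    simpa using rpow_le_rpow_of_exponent_le (by norm_num : (1 : ℝ) ≤ 4) ht₁
  have hkey : s / (4 ^ (m + 1) - 1) ≤ (2 ^ t / 2) ^ 2 := by
    have h4m : (1 : ℝ) ≤ 4 ^ m := one_le_pow₀ (by norm_num)
    have hsq : ((2 : ℝ) ^ t / 2) ^ 2 = 4 ^ t / 4 := by rw [h4t]; ring
    rw [div_le_iff₀ (by rw [pow_succ]; linarith), hsq, pow_succ]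
    linarith
  calc m + 2 * √(s / (4 ^ (m + 1) - 1)) ≤ m + 2 * (2 ^ t / 2) := by
        gcongr
        exact sqrt_le_iff.mpr ⟨by positivity, hkey⟩
    _ ≤ m + (1 + t) := by linarith [two_rpow_le_one_add ht₀ ht₁]
    _ = K + 1 := by ring

lemma logb_four_eq_half_mul_logb_two (x : ℝ) : logb 4 x = 1 / 2 * logb 2 x := by
  rw [logb, logb, show (4 : ℝ) = 2 ^ 2 by norm_num, log_pow]
  ring

/-- The γ = 0 branch of the bound on the Gaussian approximation of the mean stopping
time: with `u k = 2^{-(k+1)}·√(6n/(1-4^{-k}))`,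
`∑_{k=1}^∞ erf (u k) ≤ (1/2)·log₂(6n/π + 1) + √(3/(1 + π/(6n)))`. -/
theorem stmt_10 (n : ℕ) (hn : 1 ≤ n)
    (erf : ℝ → ℝ)
    (herf : ∀ x : ℝ, erf x = (2 / Real.sqrt π) * ∫ t in (0 : ℝ)..x, Real.exp (-t ^ 2))
    (u : ℕ → ℝ)
    (hu : ∀ k, u k = (2 : ℝ) ^ (-((k : ℤ) + 1))
      * Real.sqrt (6 * (n : ℝ) / (1 - (4 : ℝ) ^ (-(k : ℤ))))) :
    Summable (fun k : ℕ => erf (u (k + 1))) ∧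
    ∑' k : ℕ, erf (u (k + 1))
      ≤ (1 / 2) * Real.logb 2 (6 * (n : ℝ) / π + 1)
        + Real.sqrt (3 / (1 + π / (6 * (n : ℝ)))) := by
  obtain rfl : erf = Real.erf := funext herf
  have hs : 0 ≤ 6 * (n : ℝ) / π := by positivity
  have hu₀ : ∀ k, 0 ≤ u k := fun k => by rw [hu]; positivity
  have hav : ∀ k, Real.erf (u (k + 1)) ≤ √(6 * n / π / (4 ^ (k + 1) - 1)) := fun k =>
    calc Real.erf (u (k + 1)) ≤ 2 / √π * u (k + 1) := Real.erf_le_mul_self (hu₀ _)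
      _ = √(6 * n / π / (4 ^ (k + 1) - 1)) := by
        rw [hu, two_div_sqrt_pi_mul_two_zpow_mul_sqrt]
  have ha₀ : ∀ k, 0 ≤ Real.erf (u (k + 1)) := fun k => Real.erf_nonneg (hu₀ _)
  have hhalf := sqrt_div_four_pow_succ_sub_one_le hs
  refine ⟨summable_of_le_of_le_half ha₀ hav hhalf, ?_⟩
  obtain ⟨m, hm⟩ := exists_nat_add_two_mul_sqrt_le hs
  have hT : 1 ≤ √(3 / (1 + π / (6 * n))) := by
    have : π / (6 * n) ≤ 2 := by
      rw [div_le_iff₀ (by positivity)]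
      nlinarith [pi_le_four, (Nat.one_le_cast.mpr hn : (1 : ℝ) ≤ n)]
    rw [one_le_sqrt, le_div_iff₀ (by positivity)]
    linarith
  calc ∑' k, Real.erf (u (k + 1)) ≤ m + 2 * √(6 * n / π / (4 ^ (m + 1) - 1)) :=
        tsum_le_nat_add_two_mul_of_le_half ha₀ (fun _ => Real.erf_le_one _) hav hhalf m
    _ ≤ logb 4 (6 * n / π + 1) + 1 := hm
    _ ≤ _ := by rw [logb_four_eq_half_mul_logb_two]; gcongr
end

section
/- For v ∈ (0,1), define H(v) = −( v²·log₂(v²) + 2v(1−v)·log₂(2v(1−v)) + (1−v)²·log₂((1−v)²) ), the Shannon entropy (in bits) of the probability vector (v², 2v(1−v), (1−v)²). Then H(v)/(2v(1−v)) ≥ 3 for all v ∈ (0,1), with equality if and only if v = 1/2. -/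
open Real Set

noncomputable def Gf (x : ℝ) : ℝ :=
  ((1 + x) * Real.log (1 + x) + (1 - x) * Real.log (1 - x)) / 2 - Real.log 2 * x ^ 2

noncomputable def Gd (x : ℝ) : ℝ :=
  (Real.log (1 + x) - Real.log (1 - x)) / 2 - 2 * Real.log 2 * x

lemma cont_Gf : Continuous Gf := by
  have h1 : Continuous fun x : ℝ => (1 + x) * Real.log (1 + x) :=
    Real.continuous_mul_log.comp (continuous_const.add continuous_id)
  have h2 : Continuous fun x : ℝ => (1 - x) * Real.log (1 - x) :=
    Real.continuous_mul_log.comp (continuous_const.sub continuous_id)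
  exact (((h1.add h2).div_const 2).sub (continuous_const.mul (continuous_pow 2)))

lemma hasDerivAt_Gf {x : ℝ} (hx : x ∈ Ioo (-1 : ℝ) 1) : HasDerivAt Gf (Gd x) x := by
  obtain ⟨hx1, hx2⟩ := hx
  have h1 : (0:ℝ) < 1 + x := by linarith
  have h2 : (0:ℝ) < 1 - x := by linarith
  have d1 : HasDerivAt (fun y : ℝ => 1 + y) 1 x := (hasDerivAt_id x).const_add 1
  have d2 : HasDerivAt (fun y : ℝ => 1 - y) (-1) x := by
    simpa using (hasDerivAt_id x).const_sub 1
  have dl1 : HasDerivAt (fun y : ℝ => Real.log (1 + y)) (1 / (1 + x)) x :=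
    d1.log h1.ne'
  have dl2 : HasDerivAt (fun y : ℝ => Real.log (1 - y)) (-1 / (1 - x)) x :=
    d2.log h2.ne'
  have dA : HasDerivAt (fun y : ℝ => (1 + y) * Real.log (1 + y))
      (1 * Real.log (1 + x) + (1 + x) * (1 / (1 + x))) x := d1.mul dl1
  have dB : HasDerivAt (fun y : ℝ => (1 - y) * Real.log (1 - y))
      ((-1) * Real.log (1 - x) + (1 - x) * (-1 / (1 - x))) x := d2.mul dl2
  have dC : HasDerivAt (fun y : ℝ => Real.log 2 * y ^ 2) (Real.log 2 * (2 * x)) x := by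
    simpa using ((hasDerivAt_pow 2 x).const_mul (Real.log 2))
  have := ((dA.add dB).div_const 2).sub dC
  convert this using 1
  · rfl
  · rfl
  · rfl
  have e1 : (1 + x) * (1 / (1 + x)) = 1 := by field_simp
  have e2 : (1 - x) * (-1 / (1 - x)) = -1 := by field_simp
  rw [Gd]
  rw [e1, e2]
  ring

lemma hasDerivAt_Gd {x : ℝ} (hx : x ∈ Ioo (-1 : ℝ) 1) :
    HasDerivAt Gd (1 / (1 - x ^ 2) - 2 * Real.log 2) x := by
  obtain ⟨hx1, hx2⟩ := hx
  have h1 : (0:ℝ) < 1 + x := by linarith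
  have h2 : (0:ℝ) < 1 - x := by linarith
  have d1 : HasDerivAt (fun y : ℝ => 1 + y) 1 x := (hasDerivAt_id x).const_add 1
  have d2 : HasDerivAt (fun y : ℝ => 1 - y) (-1) x := by
    simpa using (hasDerivAt_id x).const_sub 1
  have dl1 : HasDerivAt (fun y : ℝ => Real.log (1 + y)) (1 / (1 + x)) x := d1.log h1.ne'
  have dl2 : HasDerivAt (fun y : ℝ => Real.log (1 - y)) (-1 / (1 - x)) x := d2.log h2.ne'
  have dC : HasDerivAt (fun y : ℝ => 2 * Real.log 2 * y) (2 * Real.log 2) x := by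
    simpa using (hasDerivAt_id x).const_mul (2 * Real.log 2)
  have := ((dl1.sub dl2).div_const 2).sub dC
  convert this using 1
  · rfl
  · rfl
  · rfl
  have hne : (1 - x ^ 2) ≠ 0 := by nlinarith
  field_simp
  ring

lemma log_two_pos' : (0.6931471803 : ℝ) < Real.log 2 := Real.log_two_gt_d9

/-- The threshold point. -/
noncomputable def cc : ℝ := Real.sqrt (1 - 1 / (2 * Real.log 2))

lemma cc_sq : cc ^ 2 = 1 - 1 / (2 * Real.log 2) := by
  have h : (0:ℝ) ≤ 1 - 1 / (2 * Real.log 2) := by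
    have := log_two_pos'
    have h2 : 1 / (2 * Real.log 2) < 1 := by
      rw [div_lt_one (by linarith)]; linarith
    linarith
  rw [cc, sq, Real.mul_self_sqrt h]

lemma cc_pos : 0 < cc := by
  have := log_two_pos'
  have h : (0:ℝ) < 1 - 1 / (2 * Real.log 2) := by
    have h2 : 1 / (2 * Real.log 2) < 1 := by
      rw [div_lt_one (by linarith)]; linarith
    linarith
  exact Real.sqrt_pos.mpr h

lemma cc_lt_one : cc < 1 := by
  have := log_two_pos'
  have h2 : (0:ℝ) < 1 / (2 * Real.log 2) := by positivity
  nlinarith [cc_sq, cc_pos]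

lemma deriv_Gf_eq {x : ℝ} (hx : x ∈ Ioo (-1 : ℝ) 1) : deriv Gf x = Gd x :=
  (hasDerivAt_Gf hx).deriv

lemma deriv2_Gf_eq {x : ℝ} (hx : x ∈ Ioo (-1 : ℝ) 1) :
    deriv^[2] Gf x = 1 / (1 - x ^ 2) - 2 * Real.log 2 := by
  have hev : deriv Gf =ᶠ[nhds x] Gd := by
    filter_upwards [isOpen_Ioo.mem_nhds hx] with y hy
    exact deriv_Gf_eq hy
  calc deriv^[2] Gf x = deriv (deriv Gf) x := by simp [Function.iterate_succ]
    _ = deriv Gd x := hev.deriv_eq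
    _ = 1 / (1 - x ^ 2) - 2 * Real.log 2 := (hasDerivAt_Gd hx).deriv

lemma Gd_neg_on : ∀ x ∈ Ioc (0 : ℝ) cc, Gd x < 0 := by
  have hmono : StrictAntiOn Gd (Icc 0 cc) := by
    apply strictAntiOn_of_deriv_neg (convex_Icc 0 cc)
    · apply ContinuousOn.mono (s := Ioo (-1:ℝ) 1)
      · intro y hy
        exact (hasDerivAt_Gd hy).continuousAt.continuousWithinAt
      · intro y hy
        exact ⟨by linarith [hy.1], lt_of_le_of_lt hy.2 cc_lt_one⟩
    · intro x hx
      rw [interior_Icc] at hx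
      obtain ⟨hx0, hxc⟩ := hx
      have hx1 : x ∈ Ioo (-1:ℝ) 1 := ⟨by linarith, lt_trans hxc cc_lt_one⟩
      rw [(hasDerivAt_Gd hx1).deriv]
      have hL := log_two_pos'
      have hsq : x ^ 2 < cc ^ 2 := by nlinarith [cc_pos]
      rw [cc_sq] at hsq
      have h1 : 1 / (2 * Real.log 2) < 1 - x ^ 2 := by linarith
      have h0 : (0:ℝ) < 1 - x ^ 2 := lt_trans (by positivity) h1
      have : 1 / (1 - x ^ 2) < 2 * Real.log 2 := by
        rw [div_lt_iff₀ h0]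
        have := (div_lt_iff₀ (show (0:ℝ) < 2 * Real.log 2 by linarith)).mp h1
        linarith [this]
      linarith
  intro x hx
  have hGd0 : Gd 0 = 0 := by simp [Gd]
  have := hmono (left_mem_Icc.mpr (le_of_lt cc_pos)) ⟨le_of_lt hx.1, hx.2⟩ hx.1
  rwa [hGd0] at this

lemma Gf_neg_left : ∀ x ∈ Ioc (0 : ℝ) cc, Gf x < 0 := by
  have hmono : StrictAntiOn Gf (Icc 0 cc) := by
    apply strictAntiOn_of_deriv_neg (convex_Icc 0 cc) cont_Gf.continuousOn
    intro x hx
    rw [interior_Icc] at hx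
    have hx1 : x ∈ Ioo (-1:ℝ) 1 := ⟨by linarith [hx.1], lt_trans hx.2 cc_lt_one⟩
    rw [deriv_Gf_eq hx1]
    exact Gd_neg_on x ⟨hx.1, le_of_lt hx.2⟩
  intro x hx
  have hGf0 : Gf 0 = 0 := by simp [Gf]
  have := hmono (left_mem_Icc.mpr (le_of_lt cc_pos)) ⟨le_of_lt hx.1, hx.2⟩ hx.1
  rwa [hGf0] at this

lemma Gf_one : Gf 1 = 0 := by
  rw [Gf]
  norm_num

lemma Gf_neg_right : ∀ x ∈ Ioo cc 1, Gf x < 0 := by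
  have hconv : StrictConvexOn ℝ (Icc cc 1) Gf := by
    apply strictConvexOn_of_deriv2_pos (convex_Icc cc 1) cont_Gf.continuousOn
    intro x hx
    rw [interior_Icc] at hx
    have hx1 : x ∈ Ioo (-1:ℝ) 1 := ⟨by linarith [cc_pos, hx.1], hx.2⟩
    rw [deriv2_Gf_eq hx1]
    have hL := log_two_pos'
    have hsq : cc ^ 2 < x ^ 2 := by nlinarith [cc_pos, hx.1, hx.2]
    rw [cc_sq] at hsq
    have h0 : (0:ℝ) < 1 - x ^ 2 := by nlinarith [hx.2, cc_pos, hx.1]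
    have h1 : 1 - x ^ 2 < 1 / (2 * Real.log 2) := by linarith
    have h2 : 1 / (1 / (2 * Real.log 2)) < 1 / (1 - x ^ 2) :=
      one_div_lt_one_div_of_lt h0 h1
    rw [one_div_one_div] at h2
    linarith
  intro x hx
  obtain ⟨hxc, hx1⟩ := hx
  set a : ℝ := (1 - x) / (1 - cc) with ha_def
  set b : ℝ := (x - cc) / (1 - cc) with hb_def
  have hc1 : (0:ℝ) < 1 - cc := by linarith [cc_lt_one]
  have ha : 0 < a := by apply div_pos <;> linarith
  have hb : 0 < b := by apply div_pos <;> linarith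
  have hab : a + b = 1 := by
    rw [ha_def, hb_def, ← add_div, div_eq_one_iff_eq hc1.ne']
    ring
  have hx_eq : a • cc + b • (1:ℝ) = x := by
    simp only [smul_eq_mul, ha_def, hb_def, mul_one]
    rw [div_mul_eq_mul_div, ← add_div, div_eq_iff hc1.ne']
    ring
  have hlt := hconv.2 (left_mem_Icc.mpr (le_of_lt cc_lt_one))
    (right_mem_Icc.mpr (le_of_lt cc_lt_one)) (ne_of_lt cc_lt_one) ha hb hab
  rw [hx_eq, Gf_one] at hlt
  simp only [smul_eq_mul, mul_zero, add_zero] at hlt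
  have hGfc : Gf cc < 0 := Gf_neg_left cc ⟨cc_pos, le_refl cc⟩
  nlinarith

lemma Gf_even (x : ℝ) : Gf (-x) = Gf x := by
  simp only [Gf]
  ring_nf

lemma Gf_neg_of_ne {x : ℝ} (hx : x ∈ Ioo (-1 : ℝ) 1) (hne : x ≠ 0) : Gf x < 0 := by
  rcases lt_trichotomy x 0 with h | h | h
  · rw [← Gf_even]
    rcases le_or_gt (-x) cc with hc | hc
    · exact Gf_neg_left (-x) ⟨by linarith, hc⟩
    · exact Gf_neg_right (-x) ⟨hc, by linarith [hx.1]⟩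
  · exact absurd h hne
  · rcases le_or_gt x cc with hc | hc
    · exact Gf_neg_left x ⟨h, hc⟩
    · exact Gf_neg_right x ⟨hc, hx.2⟩

/-- Let `H v` be the Shannon entropy (bits) of `(v², 2v(1-v), (1-v)²)`. Then
`H v / (2v(1-v)) ≥ 3` on `(0,1)`, with equality iff `v = 1/2`. -/
theorem stmt_14 (H : ℝ → ℝ)
    (hH : ∀ v : ℝ, H v = -(v ^ 2 * Real.logb 2 (v ^ 2)
      + 2 * v * (1 - v) * Real.logb 2 (2 * v * (1 - v))
      + (1 - v) ^ 2 * Real.logb 2 ((1 - v) ^ 2))) :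
    ∀ v ∈ Set.Ioo (0 : ℝ) 1,
      3 ≤ H v / (2 * v * (1 - v)) ∧
      (H v / (2 * v * (1 - v)) = 3 ↔ v = 1 / 2) := by
  intro v hv
  obtain ⟨hv0, hv1⟩ := hv
  have hq0 : (0:ℝ) < 1 - v := by linarith
  have hL := log_two_pos'
  have hLpos : (0:ℝ) < Real.log 2 := by linarith
  have h2vq : (0:ℝ) < 2 * v * (1 - v) := by positivity
  -- key identity
  have hkey : H v = 6 * v * (1 - v) - (2 / Real.log 2) * Gf (2 * v - 1) := by
    rw [hH]
    simp only [Gf, Real.logb, Real.log_pow]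
    have e1 : Real.log (2 * v * (1 - v)) = Real.log 2 + Real.log v + Real.log (1 - v) := by
      rw [Real.log_mul (by positivity) hq0.ne', Real.log_mul (by norm_num) hv0.ne']
    have e2 : Real.log (1 + (2 * v - 1)) = Real.log 2 + Real.log v := by
      rw [show (1 + (2 * v - 1)) = 2 * v by ring, Real.log_mul (by norm_num) hv0.ne']
    have e3 : Real.log (1 - (2 * v - 1)) = Real.log 2 + Real.log (1 - v) := by
      rw [show (1 - (2 * v - 1)) = 2 * (1 - v) by ring,
        Real.log_mul (by norm_num) hq0.ne']
    rw [e1, e2, e3]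
    field_simp
    ring
  have hx : (2 * v - 1) ∈ Ioo (-1:ℝ) 1 := ⟨by linarith, by linarith⟩
  have hGle : Gf (2 * v - 1) ≤ 0 := by
    rcases eq_or_ne (2 * v - 1) 0 with h | h
    · rw [h]; simp [Gf]
    · exact le_of_lt (Gf_neg_of_ne hx h)
  constructor
  · rw [le_div_iff₀ h2vq, hkey]
    have : 0 ≤ -((2 / Real.log 2) * Gf (2 * v - 1)) := by
      apply neg_nonneg.mpr
      exact mul_nonpos_of_nonneg_of_nonpos (by positivity) hGle
    linarith
  · constructor
    · intro heq
      rw [div_eq_iff h2vq.ne', hkey] at heq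
      have hG0 : Gf (2 * v - 1) = 0 := by
        have : (2 / Real.log 2) * Gf (2 * v - 1) = 0 := by linarith
        rcases mul_eq_zero.mp this with h | h
        · exact absurd h (by positivity)
        · exact h
      by_contra hne
      have : (2 * v - 1) ≠ 0 := fun h => hne (by linarith [h, sub_eq_zero.mp h])
      exact absurd hG0 (ne_of_lt (Gf_neg_of_ne hx this))
    · intro heq
      subst heq
      rw [hkey]
      norm_num [Gf]
end

section
/- Let p : ℕ → ℝ (indexed from 1) be a nonincreasing sequence with p_i ≥ 0 for all i and Σ_{i=1}^{∞} p_i = 1, and let m ≥ 1 be an integer. Suppose g_m and g_{m+1} are reals with 0 ≤ g_m ≤ Σ_{i=m}^{∞} p_i, 0 ≤ g_{m+1} ≤ Σ_{i=m+1}^{∞} p_i, and g_{m+1} < 1. Then the entropy H(p) = Σ_{i=1}^{∞} p_i·log₂(1/p_i) (with the convention 0·log₂(1/0) = 0) satisfies H(p) ≥ Σ_{i=1}^{m−1} p_i·log₂(1/p_i) + g_m·log₂( m/(1 − g_{m+1}) ). -/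
/-!
By monotonicity, `m · p_m ≤ p_1 + ⋯ + p_m ≤ 1 - g_{m+1}`, so every `p_i` with `i ≥ m` is at most
`(1 - g_{m+1}) / m` and hence contributes at least `p_i · log₂ (m / (1 - g_{m+1}))` to the entropy.
Summing over the tail, whose mass is at least `g_m`, gives the second term; the first `m - 1`
terms of the entropy are kept as they are.
-/

open Finset Real

theorem Antitone.succ_mul_le_sum_range {f : ℕ → ℝ} (hf : Antitone f) (n : ℕ) :
    (n + 1 : ℝ) * f n ≤ ∑ i ∈ range (n + 1), f i := by
  simpa using card_nsmul_le_sum (range (n + 1)) f (f n) fun i hi =>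
    hf (Nat.lt_succ_iff.mp (mem_range.mp hi))

theorem ENNReal.ofReal_sum_le {ι : Type*} (s : Finset ι) (f : ι → ℝ) :
    ENNReal.ofReal (∑ i ∈ s, f i) ≤ ∑ i ∈ s, ENNReal.ofReal (f i) :=
  Finset.le_sum_of_subadditive _ ENNReal.ofReal_zero.le (fun _ _ => ENNReal.ofReal_add_le) s f

theorem mul_logb_one_div_le_of_le {b x c : ℝ} (hb : 1 < b) (hx : 0 ≤ x) (hxc : x ≤ c) :
    x * logb b (1 / c) ≤ x * logb b (1 / x) := by
  rcases hx.eq_or_lt with rfl | hx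
  · simp
  · refine mul_le_mul_of_nonneg_left (logb_le_logb_of_le hb ?_ ?_) hx.le
    · exact one_div_pos.mpr (hx.trans_le hxc)
    · exact one_div_le_one_div_of_le hx hxc

theorem ofReal_mul_logb_le_tsum_mul_logb {ι : Type*} {b c g : ℝ} {f : ι → ℝ} (hb : 1 < b)
    (hf0 : ∀ i, 0 ≤ f i) (hfc : ∀ i, f i ≤ c) (hf : Summable f) (hg : g ≤ ∑' i, f i)
    (hc : 0 ≤ logb b (1 / c)) :
    ENNReal.ofReal (g * logb b (1 / c)) ≤ ∑' i, ENNReal.ofReal (f i * logb b (1 / f i)) :=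
  calc ENNReal.ofReal (g * logb b (1 / c))
      ≤ ENNReal.ofReal (∑' i, f i * logb b (1 / c)) := by
        rw [tsum_mul_right]; gcongr
    _ = ∑' i, ENNReal.ofReal (f i * logb b (1 / c)) :=
        ENNReal.ofReal_tsum_of_nonneg (fun i => mul_nonneg (hf0 i) hc) (hf.mul_right _)
    _ ≤ ∑' i, ENNReal.ofReal (f i * logb b (1 / f i)) := ENNReal.tsum_le_tsum fun i =>
        ENNReal.ofReal_le_ofReal (mul_logb_one_div_le_of_le hb (hf0 i) (hfc i))

theorem Antitone.le_div_of_le_tsum_nat_add {q : ℕ → ℝ} (hq : Antitone q) (hs : Summable q)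
    (h1 : ∑' i, q i = 1) (n : ℕ) {g : ℝ} (hg : g ≤ ∑' i, q (i + (n + 1))) :
    q n ≤ (1 - g) / (n + 1) := by
  rw [le_div_iff₀' (by positivity)]
  calc (n + 1 : ℝ) * q n ≤ ∑ i ∈ range (n + 1), q i := hq.succ_mul_le_sum_range n
    _ = 1 - ∑' i, q (i + (n + 1)) := by
        rw [← h1, ← hs.sum_add_tsum_nat_add (n + 1)]; ring
    _ ≤ 1 - g := by linarith

theorem ofReal_entropy_lower_bound {q : ℕ → ℝ} (hq0 : ∀ i, 0 ≤ q i) (hq : Antitone q)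
    (hs : Summable q) (h1 : ∑' i, q i = 1) (n : ℕ) {g g' : ℝ}
    (hg : g ≤ ∑' i, q (i + n)) (hg'0 : 0 ≤ g') (hg' : g' ≤ ∑' i, q (i + (n + 1)))
    (hg'1 : g' < 1) :
    ENNReal.ofReal (∑ i ∈ range n, q i * logb 2 (1 / q i) + g * logb 2 ((n + 1) / (1 - g')))
      ≤ ∑' i, ENNReal.ofReal (q i * logb 2 (1 / q i)) := by
  have hqn := hq.le_div_of_le_tsum_nat_add hs h1 n hg'
  have hL : 0 ≤ logb 2 (1 / ((1 - g') / (n + 1))) :=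
    logb_nonneg one_lt_two (by rw [one_div_div, le_div_iff₀ (by linarith)]; linarith)
  have htail := ofReal_mul_logb_le_tsum_mul_logb one_lt_two (fun i => hq0 (i + n))
    (fun i => (hq (Nat.le_add_left n i)).trans hqn) ((summable_nat_add_iff n).mpr hs) hg hL
  rw [one_div_div] at htail
  rw [← ENNReal.summable.sum_add_tsum_nat_add' (k := n)]
  calc _ ≤ ENNReal.ofReal (∑ i ∈ range n, q i * logb 2 (1 / q i))
        + ENNReal.ofReal (g * logb 2 ((n + 1) / (1 - g'))) := ENNReal.ofReal_add_le
    _ ≤ _ := add_le_add (ENNReal.ofReal_sum_le _ _) htail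

theorem stmt_15_general (p : ℕ → ℝ)
    (hnn : ∀ i, 1 ≤ i → 0 ≤ p i)
    (hmono : ∀ i, 1 ≤ i → p (i + 1) ≤ p i)
    (hsummable : Summable (fun i : ℕ => p (i + 1)))
    (hsum : ∑' i : ℕ, p (i + 1) = 1)
    (m : ℕ) (hm : 1 ≤ m) (gm gm1 : ℝ)
    (hgm : gm ≤ ∑' i : ℕ, p (m + i))
    (hgm10 : 0 ≤ gm1) (hgm1 : gm1 ≤ ∑' i : ℕ, p (m + 1 + i))
    (hgm1lt : gm1 < 1) :
    ENNReal.ofReal ((∑ i ∈ Finset.Icc 1 (m - 1), p i * Real.logb 2 (1 / p i))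
        + gm * Real.logb 2 ((m : ℝ) / (1 - gm1)))
      ≤ ∑' i : ℕ, ENNReal.ofReal (p (i + 1) * Real.logb 2 (1 / p (i + 1))) := by
  obtain ⟨n, rfl⟩ : ∃ n, m = n + 1 := ⟨m - 1, by omega⟩
  have hsum_Icc : ∑ i ∈ Icc 1 n, p i * logb 2 (1 / p i)
      = ∑ i ∈ range n, p (i + 1) * logb 2 (1 / p (i + 1)) := by
    rw [← Ico_add_one_right_eq_Icc, sum_Ico_eq_sum_range]
    simp only [add_comm 1, Nat.add_sub_cancel]
  have hshift (k : ℕ) : ∑' i, p (n + 1 + k + i) = ∑' i, p (i + (n + k) + 1) :=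
    tsum_congr fun i => by ring_nf
  have h := ofReal_entropy_lower_bound (q := fun i => p (i + 1)) (fun i => hnn _ le_add_self)
    (antitone_nat_of_succ_le fun i => hmono _ le_add_self) hsummable hsum n
    (g := gm) (by simpa [hshift 0] using hgm) hgm10 (by simpa [hshift 1] using hgm1) hgm1lt
  rw [Nat.add_sub_cancel, hsum_Icc]
  exact_mod_cast h

/-- Orlitsky–El Gamal entropy lower bound: if `p₁ ≥ p₂ ≥ … ≥ 0` with `∑ᵢ pᵢ = 1`, and
`g_m ≤ ∑_{i≥m} pᵢ`, `g_{m+1} ≤ ∑_{i≥m+1} pᵢ` with `g_m, g_{m+1} ≥ 0` and `g_{m+1} < 1`,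
then `H(p) ≥ ∑_{i=1}^{m-1} pᵢ log₂(1/pᵢ) + g_m·log₂(m/(1-g_{m+1}))`.
(The entropy is taken in `ℝ≥0∞` so that infinite entropy is handled correctly; note that
in Lean `p * logb 2 (1/p) = 0` automatically when `p = 0`.) -/
theorem stmt_15 (p : ℕ → ℝ)
    (hnn : ∀ i, 1 ≤ i → 0 ≤ p i)
    (hmono : ∀ i, 1 ≤ i → p (i + 1) ≤ p i)
    (hsummable : Summable (fun i : ℕ => p (i + 1)))
    (hsum : ∑' i : ℕ, p (i + 1) = 1)
    (m : ℕ) (hm : 1 ≤ m) (gm gm1 : ℝ)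
    (hgm0 : 0 ≤ gm) (hgm : gm ≤ ∑' i : ℕ, p (m + i))
    (hgm10 : 0 ≤ gm1) (hgm1 : gm1 ≤ ∑' i : ℕ, p (m + 1 + i))
    (hgm1lt : gm1 < 1) :
    ENNReal.ofReal ((∑ i ∈ Finset.Icc 1 (m - 1), p i * Real.logb 2 (1 / p i))
        + gm * Real.logb 2 ((m : ℝ) / (1 - gm1)))
      ≤ ∑' i : ℕ, ENNReal.ofReal (p (i + 1) * Real.logb 2 (1 / p (i + 1))) :=
  stmt_15_general p hnn hmono hsummable hsum m hm gm gm1 hgm hgm10 hgm1 hgm1lt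
end
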